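/- (Strict separation claim from the Perron argument.) Let the system F_j(x,u(x),Du_j(x),D²u_j(x)) = 0, j = 1,…,m₁+m₂, be degenerate elliptic and balanced quasi-monotone. Let (w₁,w₂) be a bounded sub-super solution and (u₁,u₂) a bounded super-sub solution with w₁ ≤ u₁ and u₂ ≤ w₂ pointwise in Ω. Fix 1 ≤ j ≤ m₁ and x ∈ Ω, and suppose φ ∈ C²(Ω) touches u_{1j}* from above at x and F_j(x, u₁*(x), u_{2*}(x), Dφ(x), D²φ(x)) > 0. Then w_{1j}*(x) < u_{1j}*(x). -/

import Mathlib

open Filter Topology Matrix Bornology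

noncomputable section

/-- Euclidean space ℝⁿ. -/
abbrev En (n : ℕ) := EuclideanSpace ℝ (Fin n)

/-- n×n real matrices (the symmetric ones model 𝒮ⁿ). -/
abbrev Symn (n : ℕ) := Matrix (Fin n) (Fin n) ℝ

/-- Loewner order: `X ≤ Y` iff `Y - X` is positive semidefinite. -/
def LoewnerLE {ι : Type*} [Fintype ι] (X Y : Matrix ι ι ℝ) : Prop := (Y - X).PosSemidef

/-- Upper semicontinuous envelope relative to Ω: f*(x) = limsup_{Ω ∋ y → x} f(y). -/
def uEnv {n : ℕ} (Ω : Set (En n)) (f : En n → ℝ) (x : En n) : ℝ := limsup f (𝓝[Ω] x)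

/-- Lower semicontinuous envelope relative to Ω: f_*(x) = liminf_{Ω ∋ y → x} f(y). -/
def lEnv {n : ℕ} (Ω : Set (En n)) (f : En n → ℝ) (x : En n) : ℝ := liminf f (𝓝[Ω] x)

/-- φ touches f from above at x (within Ω). -/
def TouchAbove {n : ℕ} (Ω : Set (En n)) (φ f : En n → ℝ) (x : En n) : Prop :=
  φ x = f x ∧ ∃ N : Set (En n), IsOpen N ∧ x ∈ N ∧ ∀ y ∈ (N ∩ Ω) \ {x}, f y < φ y

/-- φ touches f from below at x (within Ω). -/
def TouchBelow {n : ℕ} (Ω : Set (En n)) (φ f : En n → ℝ) (x : En n) : Prop :=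
  φ x = f x ∧ ∃ N : Set (En n), IsOpen N ∧ x ∈ N ∧ ∀ y ∈ (N ∩ Ω) \ {x}, φ y < f y

/-- Hessian matrix D²φ(x) of a scalar function. -/
def hess {n : ℕ} (φ : En n → ℝ) (x : En n) : Symn n :=
  Matrix.of fun i j =>
    iteratedFDeriv ℝ 2 φ x ![EuclideanSpace.single i 1, EuclideanSpace.single j 1]

/-- The type of the operators F_j(x, r, s, p, X). -/
abbrev Op (n m₁ m₂ : ℕ) :=
  En n → (Fin m₁ → ℝ) → (Fin m₂ → ℝ) → En n → Symn n → ℝ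

/-- Continuity of an operator on Ω × ℝ^{m₁} × ℝ^{m₂} × ℝⁿ × 𝒮ⁿ. -/
def OpContinuousOn {n m₁ m₂ : ℕ} (Ω : Set (En n)) (F : Op n m₁ m₂) : Prop :=
  ContinuousOn (fun q : En n × (Fin m₁ → ℝ) × (Fin m₂ → ℝ) × En n × Symn n =>
      F q.1 q.2.1 q.2.2.1 q.2.2.2.1 q.2.2.2.2)
    (Ω ×ˢ (Set.univ : Set ((Fin m₁ → ℝ) × (Fin m₂ → ℝ) × En n × Symn n)))

/-- Degenerate ellipticity of an operator. -/
def DegElliptic {n m₁ m₂ : ℕ} (Ω : Set (En n)) (F : Op n m₁ m₂) : Prop :=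
  ∀ x ∈ Ω, ∀ (r : Fin m₁ → ℝ) (s : Fin m₂ → ℝ) (p : En n) (X Y : Symn n),
    X.IsSymm → Y.IsSymm → LoewnerLE X Y → F x r s p Y ≤ F x r s p X

/-- Balanced quasi-monotonicity of the system (F1, F2). -/
def BalancedQM {n m₁ m₂ : ℕ} (Ω : Set (En n))
    (F1 : Fin m₁ → Op n m₁ m₂) (F2 : Fin m₂ → Op n m₁ m₂) : Prop :=
  (∀ j, ∀ x ∈ Ω, ∀ (r : Fin m₁ → ℝ) (s σ : Fin m₂ → ℝ) (p : En n) (X : Symn n), X.IsSymm →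
      (∀ i, s i ≤ σ i) → F1 j x r s p X ≤ F1 j x r σ p X) ∧
  (∀ j, ∀ x ∈ Ω, ∀ (r ρ : Fin m₁ → ℝ) (s : Fin m₂ → ℝ) (p : En n) (X : Symn n), X.IsSymm →
      (∀ i, r i ≤ ρ i) → r j = ρ j → F1 j x ρ s p X ≤ F1 j x r s p X) ∧
  (∀ j, ∀ x ∈ Ω, ∀ (r ρ : Fin m₁ → ℝ) (s : Fin m₂ → ℝ) (p : En n) (X : Symn n), X.IsSymm →
      (∀ i, r i ≤ ρ i) → F2 j x r s p X ≤ F2 j x ρ s p X) ∧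
  (∀ j, ∀ x ∈ Ω, ∀ (r : Fin m₁ → ℝ) (s σ : Fin m₂ → ℝ) (p : En n) (X : Symn n), X.IsSymm →
      (∀ i, s i ≤ σ i) → s j = σ j → F2 j x r σ p X ≤ F2 j x r s p X)

/-- Boundedness of a vector-valued function on Ω. -/
def BddOn {n m : ℕ} (Ω : Set (En n)) (u : En n → Fin m → ℝ) : Prop :=
  ∃ M : ℝ, ∀ x ∈ Ω, ∀ i, |u x i| ≤ M

/-- (u1, u2) is a super-sub solution of the system (F1, F2) in Ω. -/
def SuperSub {n m₁ m₂ : ℕ} (Ω : Set (En n))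
    (F1 : Fin m₁ → Op n m₁ m₂) (F2 : Fin m₂ → Op n m₁ m₂)
    (u1 : En n → Fin m₁ → ℝ) (u2 : En n → Fin m₂ → ℝ) : Prop :=
  BddOn Ω u1 ∧ BddOn Ω u2 ∧
  (∀ j, ∀ x ∈ Ω, ∀ φ : En n → ℝ, ContDiff ℝ 2 φ →
      TouchBelow Ω φ (lEnv Ω fun y => u1 y j) x →
      0 ≤ F1 j x (fun i => lEnv Ω (fun y => u1 y i) x) (fun i => uEnv Ω (fun y => u2 y i) x)
            (gradient φ x) (hess φ x)) ∧
  (∀ j, ∀ x ∈ Ω, ∀ φ : En n → ℝ, ContDiff ℝ 2 φ →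
      TouchAbove Ω φ (uEnv Ω fun y => u2 y j) x →
      F2 j x (fun i => lEnv Ω (fun y => u1 y i) x) (fun i => uEnv Ω (fun y => u2 y i) x)
          (gradient φ x) (hess φ x) ≤ 0)

/-- (u1, u2) is a sub-super solution of the system (F1, F2) in Ω. -/
def SubSuper {n m₁ m₂ : ℕ} (Ω : Set (En n))
    (F1 : Fin m₁ → Op n m₁ m₂) (F2 : Fin m₂ → Op n m₁ m₂)
    (u1 : En n → Fin m₁ → ℝ) (u2 : En n → Fin m₂ → ℝ) : Prop :=
  BddOn Ω u1 ∧ BddOn Ω u2 ∧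
  (∀ j, ∀ x ∈ Ω, ∀ φ : En n → ℝ, ContDiff ℝ 2 φ →
      TouchAbove Ω φ (uEnv Ω fun y => u1 y j) x →
      F1 j x (fun i => uEnv Ω (fun y => u1 y i) x) (fun i => lEnv Ω (fun y => u2 y i) x)
          (gradient φ x) (hess φ x) ≤ 0) ∧
  (∀ j, ∀ x ∈ Ω, ∀ φ : En n → ℝ, ContDiff ℝ 2 φ →
      TouchBelow Ω φ (lEnv Ω fun y => u2 y j) x →
      0 ≤ F2 j x (fun i => uEnv Ω (fun y => u1 y i) x) (fun i => lEnv Ω (fun y => u2 y i) x)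
            (gradient φ x) (hess φ x))

/-! Since `w₁ ≤ u₁`, also `w₁* ≤ u₁*`, and `u₂_* ≤ w₂_*`. If `w_{1j}*(x) = u_{1j}*(x)`, the test
function `φ` touching `u_{1j}*` from above at `x` touches `w_{1j}*` there as well, so the
subsolution property of `w` gives `F_j(x, w₁*, w₂_*, Dφ, D²φ) ≤ 0`. Quasi-monotonicity moves the
arguments to `(u₁*, u₂_*)` without increasing `F_j`, as the `j`-th entries agree, contradicting
`F_j(x, u₁*, u₂_*, Dφ, D²φ) > 0`. -/

lemma hess_isSymm {n : ℕ} {φ : En n → ℝ} (hφ : ContDiff ℝ 2 φ) (x : En n) :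
    (hess φ x).IsSymm := by
  have hsymm := (hφ.contDiffAt (x := x)).isSymmSndFDerivAt (by simp)
  refine Matrix.IsSymm.ext fun i j => ?_
  simp only [hess, Matrix.of_apply, iteratedFDeriv_two_apply, Matrix.cons_val_zero,
    Matrix.cons_val_one]
  exact hsymm _ _

section Envelopes

variable {n : ℕ} {Ω : Set (En n)} {f g : En n → ℝ} {y : En n}

lemma uEnv_mono (hfg : ∀ z ∈ Ω, f z ≤ g z) (hf : BddBelow (f '' Ω)) (hg : BddAbove (g '' Ω))
    (hy : y ∈ closure Ω) : uEnv Ω f y ≤ uEnv Ω g y :=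
  haveI := mem_closure_iff_nhdsWithin_neBot.1 hy
  limsup_le_limsup (eventually_nhdsWithin_of_forall hfg)
    (hf.isBoundedUnder self_mem_nhdsWithin).isCoboundedUnder_le
    (hg.isBoundedUnder self_mem_nhdsWithin)

lemma lEnv_mono (hfg : ∀ z ∈ Ω, f z ≤ g z) (hf : BddBelow (f '' Ω)) (hg : BddAbove (g '' Ω))
    (hy : y ∈ closure Ω) : lEnv Ω f y ≤ lEnv Ω g y :=
  haveI := mem_closure_iff_nhdsWithin_neBot.1 hy
  liminf_le_liminf (eventually_nhdsWithin_of_forall hfg)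
    (hf.isBoundedUnder self_mem_nhdsWithin)
    (hg.isBoundedUnder self_mem_nhdsWithin).isCoboundedUnder_ge

end Envelopes

lemma BddOn.bddAbove_image {n m : ℕ} {Ω : Set (En n)} {u : En n → Fin m → ℝ}
    (hu : BddOn Ω u) (i : Fin m) : BddAbove ((fun z => u z i) '' Ω) := by
  obtain ⟨M, hM⟩ := hu
  exact ⟨M, Set.forall_mem_image.2 fun z hz => (abs_le.1 (hM z hz i)).2⟩

lemma BddOn.bddBelow_image {n m : ℕ} {Ω : Set (En n)} {u : En n → Fin m → ℝ}
    (hu : BddOn Ω u) (i : Fin m) : BddBelow ((fun z => u z i) '' Ω) := by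
  obtain ⟨M, hM⟩ := hu
  exact ⟨-M, Set.forall_mem_image.2 fun z hz => (abs_le.1 (hM z hz i)).1⟩

lemma TouchAbove.of_le_of_eq {n : ℕ} {Ω : Set (En n)} {φ f g : En n → ℝ} {x : En n}
    (h : TouchAbove Ω φ g x) (hfg : ∀ z ∈ Ω, f z ≤ g z) (hx : f x = g x) :
    TouchAbove Ω φ f x := by
  obtain ⟨hφx, N, hN, hxN, hlt⟩ := h
  exact ⟨hφx.trans hx.symm, N, hN, hxN, fun z hz => (hfg z hz.1.2).trans_lt (hlt z hz)⟩

lemma BalancedQM.F1_le_F1 {n m₁ m₂ : ℕ} {Ω : Set (En n)}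
    {F1 : Fin m₁ → Op n m₁ m₂} {F2 : Fin m₂ → Op n m₁ m₂} (hQM : BalancedQM Ω F1 F2)
    {j : Fin m₁} {x : En n} (hx : x ∈ Ω) {r ρ : Fin m₁ → ℝ} {s σ : Fin m₂ → ℝ} {p : En n}
    {X : Symn n} (hX : X.IsSymm) (hrρ : ∀ i, r i ≤ ρ i) (hj : r j = ρ j)
    (hsσ : ∀ i, s i ≤ σ i) : F1 j x ρ s p X ≤ F1 j x r σ p X :=
  (hQM.2.1 j x hx r ρ s p X hX hrρ hj).trans (hQM.1 j x hx r s σ p X hX hsσ)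

theorem strict_separation_general {n m₁ m₂ : ℕ}
    (Ω : Set (En n))
    (F1 : Fin m₁ → Op n m₁ m₂) (F2 : Fin m₂ → Op n m₁ m₂)
    (hQM : BalancedQM Ω F1 F2)
    (w1 u1 : En n → Fin m₁ → ℝ) (w2 u2 : En n → Fin m₂ → ℝ)
    (hw : SubSuper Ω F1 F2 w1 w2) (hu : SuperSub Ω F1 F2 u1 u2)
    (hle1 : ∀ x ∈ Ω, ∀ j, w1 x j ≤ u1 x j)
    (hle2 : ∀ x ∈ Ω, ∀ j, u2 x j ≤ w2 x j)
    (j : Fin m₁) (x : En n) (hx : x ∈ Ω)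
    (φ : En n → ℝ) (hφ : ContDiff ℝ 2 φ)
    (htouch : TouchAbove Ω φ (uEnv Ω fun y => u1 y j) x)
    (hpos : 0 < F1 j x (fun i => uEnv Ω (fun y => u1 y i) x)
        (fun i => lEnv Ω (fun y => u2 y i) x) (gradient φ x) (hess φ x)) :
    uEnv Ω (fun y => w1 y j) x < uEnv Ω (fun y => u1 y j) x := by
  have hw1u1 : ∀ y ∈ Ω, ∀ i, uEnv Ω (fun z => w1 z i) y ≤ uEnv Ω (fun z => u1 z i) y :=
    fun y hy i => uEnv_mono (fun z hz => hle1 z hz i) (hw.1.bddBelow_image i)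
      (hu.1.bddAbove_image i) (subset_closure hy)
  have hu2w2 : ∀ i, lEnv Ω (fun z => u2 z i) x ≤ lEnv Ω (fun z => w2 z i) x :=
    fun i => lEnv_mono (fun z hz => hle2 z hz i) (hu.2.1.bddBelow_image i)
      (hw.2.1.bddAbove_image i) (subset_closure hx)
  by_contra! hge
  have heq := le_antisymm (hw1u1 x hx j) hge
  have hw_sub := hw.2.2.1 j x hx φ hφ (htouch.of_le_of_eq (fun y hy => hw1u1 y hy j) heq)
  have hmono := hQM.F1_le_F1 (p := gradient φ x) hx (hess_isSymm hφ x) (hw1u1 x hx) heq hu2w2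
  linarith

/-- Strict separation claim from the Perron argument: if (w1, w2) is a
bounded sub-super solution, (u1, u2) a bounded super-sub solution with w1 ≤ u1 and
u2 ≤ w2 in Ω, φ ∈ C² touches u_{1j}* from above at x ∈ Ω and
F_j(x, u₁*(x), u_{2*}(x), Dφ(x), D²φ(x)) > 0, then w_{1j}*(x) < u_{1j}*(x). -/
theorem strict_separation {n m₁ m₂ : ℕ} (hm₁ : 1 ≤ m₁)
    (Ω : Set (En n)) (hΩo : IsOpen Ω) (hΩb : IsBounded Ω)
    (F1 : Fin m₁ → Op n m₁ m₂) (F2 : Fin m₂ → Op n m₁ m₂)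
    (hF1c : ∀ j, OpContinuousOn Ω (F1 j)) (hF2c : ∀ j, OpContinuousOn Ω (F2 j))
    (hF1e : ∀ j, DegElliptic Ω (F1 j)) (hF2e : ∀ j, DegElliptic Ω (F2 j))
    (hQM : BalancedQM Ω F1 F2)
    (w1 u1 : En n → Fin m₁ → ℝ) (w2 u2 : En n → Fin m₂ → ℝ)
    (hw : SubSuper Ω F1 F2 w1 w2) (hu : SuperSub Ω F1 F2 u1 u2)
    (hle1 : ∀ x ∈ Ω, ∀ j, w1 x j ≤ u1 x j)
    (hle2 : ∀ x ∈ Ω, ∀ j, u2 x j ≤ w2 x j)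
    (j : Fin m₁) (x : En n) (hx : x ∈ Ω)
    (φ : En n → ℝ) (hφ : ContDiff ℝ 2 φ)
    (htouch : TouchAbove Ω φ (uEnv Ω fun y => u1 y j) x)
    (hpos : 0 < F1 j x (fun i => uEnv Ω (fun y => u1 y i) x)
        (fun i => lEnv Ω (fun y => u2 y i) x) (gradient φ x) (hess φ x)) :
    uEnv Ω (fun y => w1 y j) x < uEnv Ω (fun y => u1 y j) x :=
  strict_separation_general Ω F1 F2 hQM w1 u1 w2 u2 hw hu hle1 hle2 j x hx φ hφ htouch hpos
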